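/- (One-parametric subgroups are Diophantine, type A instance.) Let R be a commutative ring and let n ≥ 3. Then {⁅g, 1 + E_{23}⁆ : g ∈ SL_n(R) and g commutes with every element of Γ} = {1 + r • E_{13} : r ∈ R}, where ⁅x, y⁆ = x·y·x⁻¹·y⁻¹ denotes the commutator and Γ = {1 + E_{kl} : k ≠ l, k ≠ 2, l ≠ 1} (indices 1-based). In other words, the one-parametric root subgroup X_{13} = {t_{13}(r) : r ∈ R} equals the set of commutators of elements of the centralizer of Γ with the fixed transvection t_{23}(1). -/

import Mathlib

/-!
An element of `SL_n(R)` commuting with all of `Γ` commutes with the matrix units `E_{kl}`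
(`k ≠ l`, `k ≠ 2`, `l ≠ 1`), and these alone force it to have the shape `d·1 + r·E_{12}`.
The centralizer is a subgroup, so also `g⁻¹ = d'·1 + r'·E_{12}`. Then
`g·t_{23}(1) = t_{23}(1)·g + r·E_{13}`, while `E_{13}·g⁻¹ = d'·E_{13}` and
`E_{13}·t_{23}(1)⁻¹ = E_{13}`, whence `⁅g, t_{23}(1)⁆ = t_{13}(r d')`. Conversely `g = t_{12}(r)`
centralizes `Γ` and yields `t_{13}(r)`.
-/

open Matrix
open scoped commutatorElement

/-- The elementary transvection `t_{23}(1) = 1 + E_{23}` (1-based indices) as an element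
of `SL_n(R)`. -/
def transvection23 (R : Type*) [CommRing R] {n : ℕ} (hn : 3 ≤ n) :
    Matrix.SpecialLinearGroup (Fin n) R :=
  ⟨1 + single (⟨1, by omega⟩ : Fin n) (⟨2, by omega⟩ : Fin n) 1,
    Matrix.det_transvection_of_ne _ _ (by simp [Fin.ext_iff]) 1⟩

namespace Matrix

variable {ι R : Type*} [Fintype ι] [DecidableEq ι] [CommRing R]

theorem commute_single_single {i j k l : ι} (hjk : j ≠ k) (hli : l ≠ i) (a b : R) :
    Commute (single i j a) (single k l b) := by
  rw [Commute, SemiconjBy, single_mul_single_of_ne (h := hjk),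
    single_mul_single_of_ne (h := hli)]

theorem eq_smul_one_add_single_of_forall_commute {G : Matrix ι ι R} {i j : ι} (hij : i ≠ j)
    (hG : ∀ k l, k ≠ l → k ≠ j → l ≠ i → Commute G (1 + single k l 1)) :
    G = G j j • (1 : Matrix ι ι R) + single i j (G i j) := by
  have hG' : ∀ k l, k ≠ l → k ≠ j → l ≠ i → Commute (single k l 1) G := fun k l hkl hkj hli ↦ by
    simpa using ((hG k l hkl hkj hli).sub_right (Commute.one_right G)).symm
  ext a b
  rcases eq_or_ne a b with rfl | hab
  · rcases eq_or_ne a j with rfl | haj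
    · simp [hij]
    · simpa [single_apply, haj.symm] using diag_eq_of_commute_single (hG' a j haj haj hij.symm)
  · rcases eq_or_ne b j with rfl | hbj
    · rcases eq_or_ne a i with rfl | hai
      · simp [hab]
      · simpa [single_apply, hab, hai.symm] using
          row_eq_zero_of_commute_single (hG' i a hai.symm hij hai) hab.symm
    · simpa [single_apply, hab, hbj.symm] using
        col_eq_zero_of_commute_single (hG' b j hbj hbj hij.symm) hab

namespace SpecialLinearGroup

theorem coe_commutatorElement_of_eq_smul_one_add_single {i j k : ι} (hik : i ≠ k) (hjk : j ≠ k)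
    {g t : SpecialLinearGroup ι R} {d r d' r' c : R}
    (hg : (g : Matrix ι ι R) = d • 1 + single i j r)
    (hg' : ((g⁻¹ : SpecialLinearGroup ι R) : Matrix ι ι R) = d' • 1 + single i j r')
    (ht : (t : Matrix ι ι R) = 1 + single j k c) :
    ((⁅g, t⁆ : SpecialLinearGroup ι R) : Matrix ι ι R) = 1 + (r * c * d') • single i k 1 := by
  rw [smul_single, smul_eq_mul, mul_one]
  have hgt : (g : Matrix ι ι R) * t = t * g + single i k (r * c) := by
    rw [hg, ht]
    simp only [mul_add, add_mul, mul_one, one_mul, Algebra.smul_mul_assoc, Algebra.mul_smul_comm,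
      single_mul_single_same, single_mul_single_of_ne, ne_eq, hik.symm, not_false_eq_true,
      smul_single, smul_eq_mul, smul_add, add_zero]
    abel
  have hE_g' : single i k (r * c) * (g⁻¹ : SpecialLinearGroup ι R) =
      single i k (r * c * d') := by
    rw [hg']
    simp [mul_add, hik.symm, mul_comm d']
  have hE_t' : single i k (r * c * d') * (t⁻¹ : SpecialLinearGroup ι R) =
      single i k (r * c * d') := by
    have hE_t : single i k (r * c * d') * t = single i k (r * c * d') := by
      rw [ht, mul_add, mul_one, single_mul_single_of_ne (h := hjk.symm), add_zero]
    rw [← hE_t, mul_assoc, ← coe_mul, mul_inv_cancel, coe_one, mul_one, hE_t]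
  have hgg' : (g : Matrix ι ι R) * (g⁻¹ : SpecialLinearGroup ι R) = 1 := by
    rw [← coe_mul, mul_inv_cancel, coe_one]
  have htt' : (t : Matrix ι ι R) * (t⁻¹ : SpecialLinearGroup ι R) = 1 := by
    rw [← coe_mul, mul_inv_cancel, coe_one]
  calc ((⁅g, t⁆ : SpecialLinearGroup ι R) : Matrix ι ι R)
      = g * t * (g⁻¹ : SpecialLinearGroup ι R) * (t⁻¹ : SpecialLinearGroup ι R) := rfl
    _ = t * (g * (g⁻¹ : SpecialLinearGroup ι R)) * (t⁻¹ : SpecialLinearGroup ι R) +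
          single i k (r * c) * (g⁻¹ : SpecialLinearGroup ι R) * (t⁻¹ : SpecialLinearGroup ι R) := by
        rw [hgt, add_mul, add_mul, mul_assoc (t : Matrix ι ι R)]
    _ = 1 + single i k (r * c * d') := by rw [hgg', mul_one, htt', hE_g', hE_t']

end SpecialLinearGroup

end Matrix

/-- One-parametric subgroups are Diophantine, type A instance: over a commutative ring `R`
and for `n ≥ 3`, the set of commutators `⁅g, t_{23}(1)⁆`, where `g` ranges over the
centralizer in `SL_n(R)` of `Γ = {1 + E_{kl} : k ≠ l, k ≠ 2, l ≠ 1}`, is exactly the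
one-parametric root subgroup `X_{13} = {1 + r • E_{13} : r ∈ R}` (1-based indices). -/
theorem root_subgroup_diophantine_typeA {R : Type*} [CommRing R] {n : ℕ} (hn : 3 ≤ n) :
    {m : Matrix (Fin n) (Fin n) R | ∃ g : Matrix.SpecialLinearGroup (Fin n) R,
      (∀ k l : Fin n, k ≠ l → k ≠ ⟨1, by omega⟩ → l ≠ ⟨0, by omega⟩ →
        (g : Matrix (Fin n) (Fin n) R) * (1 + single k l 1) =
          (1 + single k l 1) * (g : Matrix (Fin n) (Fin n) R)) ∧
      m = (↑(⁅g, transvection23 R hn⁆) : Matrix (Fin n) (Fin n) R)} =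
    {m : Matrix (Fin n) (Fin n) R | ∃ r : R,
      m = 1 + r • single (⟨0, by omega⟩ : Fin n) (⟨2, by omega⟩ : Fin n) 1} := by
  set i₀ : Fin n := ⟨0, by omega⟩
  set i₁ : Fin n := ⟨1, by omega⟩
  set i₂ : Fin n := ⟨2, by omega⟩
  have h₀₁ : i₀ ≠ i₁ := by simp [i₀, i₁, Fin.ext_iff]
  have h₀₂ : i₀ ≠ i₂ := by simp [i₀, i₂, Fin.ext_iff]
  have h₁₂ : i₁ ≠ i₂ := by simp [i₁, i₂, Fin.ext_iff]
  have ht : (transvection23 R hn : Matrix (Fin n) (Fin n) R) = 1 + single i₁ i₂ 1 := rfl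
  ext m
  constructor
  · rintro ⟨g, hg, rfl⟩
    have hg' : ∀ k l, k ≠ l → k ≠ i₁ → l ≠ i₀ →
        Commute ((g⁻¹ : SpecialLinearGroup (Fin n) R) : Matrix (Fin n) (Fin n) R)
          (1 + single k l 1) :=
      fun k l hkl hk hl ↦
        Commute.units_inv_left (u := SpecialLinearGroup.toGL g) (hg k l hkl hk hl)
    exact ⟨_, SpecialLinearGroup.coe_commutatorElement_of_eq_smul_one_add_single h₀₂ h₁₂
      (eq_smul_one_add_single_of_forall_commute h₀₁ hg)
      (eq_smul_one_add_single_of_forall_commute h₀₁ hg') ht⟩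
  · rintro ⟨r, rfl⟩
    refine ⟨SpecialLinearGroup.transvection h₀₁ r, fun k l _ hk hl ↦ ?_, ?_⟩
    · exact (Commute.one_left _).add_left
        ((Commute.one_right _).add_right (commute_single_single hk.symm hl r 1))
    · have hg : (SpecialLinearGroup.transvection h₀₁ r : Matrix (Fin n) (Fin n) R) =
          (1 : R) • 1 + single i₀ i₁ r := by rw [one_smul]; rfl
      have hg' : ((SpecialLinearGroup.transvection h₀₁ r)⁻¹ : SpecialLinearGroup (Fin n) R) =
          ((1 : R) • 1 + single i₀ i₁ (-r) : Matrix (Fin n) (Fin n) R) := by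
        rw [SpecialLinearGroup.transvection_inv, one_smul]; rfl
      rw [SpecialLinearGroup.coe_commutatorElement_of_eq_smul_one_add_single h₀₂ h₁₂ hg hg' ht,
        mul_one, mul_one]
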